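/- arXiv:1607.04894 — 2 statements merged into one kernel-verified Lean document; each statement's English description precedes it below -/
import Mathlib

section
/- The derivative of f(θ) = (A₁ − x A₂ + y A₃)/(A₁ − 3A₂ + 2A₃), with A₁ = πR², A₂(θ) = 2R²(θ − sin θ cos θ), A₃(θ) = R²[3(θ − π/6) + √3 cos²θ − 3 sin θ cos θ], equals (√3 sin θ)/(6 cos³θ) · [(2 − y)(π − 2θ) + 4θ(1 + y − x)] times the appropriate constant, and is strictly positive on (π/6, arccos(1/√3)) provided 0 ≤ x < 3, 0 ≤ y < 2, and 1 + y − x > 0. -/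
open Real

/-!
Since `A₁ - 3 A₂ + 2 A₃ = 2√3 R² cos² θ`, the factor `R²` cancels and the coverage fraction is
`g(θ) / (2√3 cos² θ)` with `g` the numerator divided by `R²`. For such a quotient the derivative is
`(g' cos θ + 2 g sin θ) / (2√3 cos³ θ)`, and in `g' cos θ + 2 g sin θ` every trigonometric term
cancels except `sin θ · ((2 - y) π + (6y - 4x) θ)`. On the given interval both `sin θ` and
`cos θ` are positive and `(2 - y)(π - 2θ) + 4θ(1 + y - x)` is a sum of two positive terms.
-/

noncomputable def coverageNumerator (x y θ : ℝ) : ℝ :=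
  π - 2 * x * (θ - sin θ * cos θ) + y * (3 * (θ - π / 6) + √3 * cos θ ^ 2 - 3 * (sin θ * cos θ))

theorem hasDerivAt_div_cos_sq {g : ℝ → ℝ} {g' θ : ℝ} (hg : HasDerivAt g g' θ)
    (hθ : cos θ ≠ 0) :
    HasDerivAt (fun t => g t / cos t ^ 2) ((g' * cos θ + 2 * g θ * sin θ) / cos θ ^ 3) θ := by
  have hc2 : HasDerivAt (fun t => cos t ^ 2) (2 * cos θ * -sin θ) θ := by
    simpa using (hasDerivAt_cos θ).fun_pow 2
  refine (hg.div hc2 (pow_ne_zero 2 hθ)).congr_deriv ?_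
  field_simp
  ring

theorem hasDerivAt_coverageNumerator (x y θ : ℝ) :
    HasDerivAt (coverageNumerator x y)
      ((6 * y - 4 * x) * sin θ ^ 2 - 2 * √3 * y * sin θ * cos θ) θ := by
  have hsc : HasDerivAt (fun t => sin t * cos t) (cos θ * cos θ + sin θ * -sin θ) θ :=
    (hasDerivAt_sin θ).fun_mul (hasDerivAt_cos θ)
  have hc2 : HasDerivAt (fun t => cos t ^ 2) (2 * cos θ * -sin θ) θ := by
    simpa using (hasDerivAt_cos θ).fun_pow 2
  have h := (((hasDerivAt_id' θ).fun_sub hsc).const_mul (2 * x)).const_sub π |>.fun_add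
    (((((hasDerivAt_id' θ).sub_const (π / 6)).const_mul 3).fun_add (hc2.const_mul √3)).fun_sub
      (hsc.const_mul 3) |>.const_mul y)
  exact h.congr_deriv (by linear_combination (2 * x - 3 * y) * sin_sq_add_cos_sq θ)

theorem coverageNumerator_deriv_mul_cos_add (x y θ : ℝ) :
    ((6 * y - 4 * x) * sin θ ^ 2 - 2 * √3 * y * sin θ * cos θ) * cos θ
      + 2 * coverageNumerator x y θ * sin θ = sin θ * ((2 - y) * π + (6 * y - 4 * x) * θ) := by
  unfold coverageNumerator
  ring

theorem coverage_fraction_eq {R x y : ℝ} (hR : R ≠ 0) {A₂ A₃ : ℝ → ℝ}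
    (hA₂ : ∀ θ, A₂ θ = 2 * R ^ 2 * (θ - sin θ * cos θ))
    (hA₃ : ∀ θ, A₃ θ = R ^ 2 * (3 * (θ - π / 6) + √3 * cos θ ^ 2 - 3 * sin θ * cos θ))
    (θ : ℝ) :
    (π * R ^ 2 - x * A₂ θ + y * A₃ θ) / (π * R ^ 2 - 3 * A₂ θ + 2 * A₃ θ)
      = coverageNumerator x y θ / (2 * √3) / cos θ ^ 2 := by
  have hnum : π * R ^ 2 - x * A₂ θ + y * A₃ θ = R ^ 2 * coverageNumerator x y θ := by
    rw [hA₂, hA₃, coverageNumerator]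
    ring
  have hden : π * R ^ 2 - 3 * A₂ θ + 2 * A₃ θ = R ^ 2 * (2 * √3 * cos θ ^ 2) := by
    rw [hA₂, hA₃]
    ring
  rw [hnum, hden, mul_div_mul_left _ _ (pow_ne_zero 2 hR), div_div]

theorem coverage_fraction_deriv_case2_general (R x y : ℝ) (hR : 0 < R)
    (hy2 : y < 2)
    (hxy : 0 < 1 + y - x)
    (A₁ : ℝ) (hA₁ : A₁ = π * R ^ 2)
    (A₂ A₃ : ℝ → ℝ)
    (hA₂ : ∀ θ, A₂ θ = 2 * R ^ 2 * (θ - Real.sin θ * Real.cos θ))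
    (hA₃ : ∀ θ, A₃ θ = R ^ 2 * (3 * (θ - π / 6) + Real.sqrt 3 * Real.cos θ ^ 2
      - 3 * Real.sin θ * Real.cos θ)) :
    ∀ θ ∈ Set.Ioo (π / 6) (Real.arccos (1 / Real.sqrt 3)),
      HasDerivAt (fun θ => (A₁ - x * A₂ θ + y * A₃ θ) / (A₁ - 3 * A₂ θ + 2 * A₃ θ))
        (Real.sqrt 3 * Real.sin θ / (6 * Real.cos θ ^ 3) *
          ((2 - y) * (π - 2 * θ) + 4 * θ * (1 + y - x))) θ ∧
      0 < Real.sqrt 3 * Real.sin θ / (6 * Real.cos θ ^ 3) *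
          ((2 - y) * (π - 2 * θ) + 4 * θ * (1 + y - x)) := by
  rintro θ ⟨hθ_low, hθ_high⟩
  subst hA₁
  have hθ_pos : 0 < θ := (by positivity : (0 : ℝ) < π / 6).trans hθ_low
  have hθ_lt : θ < π / 2 :=
    hθ_high.trans (arccos_lt_pi_div_two.mpr (by positivity))
  have hsin : 0 < sin θ := sin_pos_of_pos_of_lt_pi hθ_pos (by linarith [pi_pos])
  have hcos : 0 < cos θ := cos_pos_of_mem_Ioo ⟨by linarith, hθ_lt⟩
  have hbracket : 0 < (2 - y) * (π - 2 * θ) + 4 * θ * (1 + y - x) :=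
    add_pos (mul_pos (by linarith) (by linarith)) (mul_pos (by positivity) hxy)
  rw [funext (coverage_fraction_eq hR.ne' hA₂ hA₃)]
  refine ⟨(hasDerivAt_div_cos_sq ((hasDerivAt_coverageNumerator x y θ).div_const _)
    hcos.ne').congr_deriv ?_, by positivity⟩
  calc _ = (((6 * y - 4 * x) * sin θ ^ 2 - 2 * √3 * y * sin θ * cos θ) * cos θ
          + 2 * coverageNumerator x y θ * sin θ) / (2 * √3 * cos θ ^ 3) := by ring
    _ = sin θ * ((2 - y) * π + (6 * y - 4 * x) * θ) / (2 * √3 * cos θ ^ 3) := by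
      rw [coverageNumerator_deriv_mul_cos_add]
    _ = _ := by
      field_simp
      rw [sq_sqrt (by norm_num)]
      ring

/-- Case 2 of Proposition 3: on `(π/6, arccos(1/√3))`, the derivative of
`f(θ) = (A₁ − x A₂(θ) + y A₃(θ)) / (A₁ − 3 A₂(θ) + 2 A₃(θ))` equals
`(√3 sin θ)/(6 cos³ θ) · [(2 − y)(π − 2θ) + 4θ(1 + y − x)]` and is strictly
positive, provided `0 ≤ x < 3`, `0 ≤ y < 2` and `1 + y − x > 0`. -/
theorem coverage_fraction_deriv_case2 (R x y : ℝ) (hR : 0 < R)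
    (hx0 : 0 ≤ x) (hx3 : x < 3) (hy0 : 0 ≤ y) (hy2 : y < 2)
    (hxy : 0 < 1 + y - x)
    (A₁ : ℝ) (hA₁ : A₁ = π * R ^ 2)
    (A₂ A₃ : ℝ → ℝ)
    (hA₂ : ∀ θ, A₂ θ = 2 * R ^ 2 * (θ - Real.sin θ * Real.cos θ))
    (hA₃ : ∀ θ, A₃ θ = R ^ 2 * (3 * (θ - π / 6) + Real.sqrt 3 * Real.cos θ ^ 2
      - 3 * Real.sin θ * Real.cos θ)) :
    ∀ θ ∈ Set.Ioo (π / 6) (Real.arccos (1 / Real.sqrt 3)),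
      HasDerivAt (fun θ => (A₁ - x * A₂ θ + y * A₃ θ) / (A₁ - 3 * A₂ θ + 2 * A₃ θ))
        (Real.sqrt 3 * Real.sin θ / (6 * Real.cos θ ^ 3) *
          ((2 - y) * (π - 2 * θ) + 4 * θ * (1 + y - x))) θ ∧
      0 < Real.sqrt 3 * Real.sin θ / (6 * Real.cos θ ^ 3) *
          ((2 - y) * (π - 2 * θ) + 4 * θ * (1 + y - x)) :=
  coverage_fraction_deriv_case2_general R x y hR hy2 hxy A₁ hA₁ A₂ A₃ hA₂ hA₃
end

section
/- Let θ ∈ (π/6, arccos(1/√3)). Then the 3-overlap area A₃(θ) = R²[3(θ − π/6) + √3 cos²θ − 3 sin θ cos θ] is strictly positive, and A₃ is continuous at θ = π/6 with A₃(π/6) = 0. -/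
/-!
The bracket `f θ = 3(θ − π/6) + √3 cos²θ − 3 sin θ cos θ` vanishes at `π/6`, and its
derivative `6 sin²θ − 2√3 sin θ cos θ = 4√3 sin θ sin(θ − π/6)` is positive on `(π/6, π)`.
Hence `f` is strictly increasing on `[π/6, π]`, which contains `(π/6, arccos(1/√3))`,
so `f > 0` there.
-/

open Real Set

noncomputable def tripleOverlapShape (θ : ℝ) : ℝ :=
  3 * (θ - π / 6) + √3 * cos θ ^ 2 - 3 * sin θ * cos θ

@[fun_prop]
lemma continuous_tripleOverlapShape : Continuous tripleOverlapShape := by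
  unfold tripleOverlapShape
  fun_prop

lemma tripleOverlapShape_pi_div_six : tripleOverlapShape (π / 6) = 0 := by
  have h3 : √3 ^ 2 = 3 := sq_sqrt (by norm_num)
  rw [tripleOverlapShape, cos_pi_div_six, sin_pi_div_six]
  linear_combination (√3 / 4) * h3

lemma hasDerivAt_tripleOverlapShape (θ : ℝ) :
    HasDerivAt tripleOverlapShape (4 * √3 * sin θ * sin (θ - π / 6)) θ := by
  have hlin : HasDerivAt (fun x : ℝ => 3 * (x - π / 6)) 3 θ := by
    simpa using ((hasDerivAt_id θ).sub_const (π / 6)).const_mul 3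
  have hcos_sq : HasDerivAt (fun x => cos x ^ 2) (2 * cos θ * -sin θ) θ := by
    simpa using (hasDerivAt_cos θ).fun_pow 2
  have hsin_cos := ((hasDerivAt_sin θ).mul (hasDerivAt_cos θ)).const_mul 3
  have hshape : tripleOverlapShape =
      ((fun x => 3 * (x - π / 6)) + fun x => √3 * cos x ^ 2) - fun x => 3 * (sin * cos) x := by
    funext x
    simp only [tripleOverlapShape, Pi.add_apply, Pi.sub_apply, Pi.mul_apply]
    ring
  rw [hshape]
  refine ((hlin.add (hcos_sq.const_mul √3)).sub hsin_cos).congr_deriv ?_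
  have h3 : √3 ^ 2 = 3 := sq_sqrt (by norm_num)
  rw [sin_sub, cos_pi_div_six, sin_pi_div_six]
  linear_combination -2 * sin θ ^ 2 * h3 - 3 * sin_sq_add_cos_sq θ

lemma strictMonoOn_tripleOverlapShape : StrictMonoOn tripleOverlapShape (Icc (π / 6) π) := by
  refine strictMonoOn_of_deriv_pos (convex_Icc _ _) continuous_tripleOverlapShape.continuousOn ?_
  intro θ hθ
  rw [interior_Icc] at hθ
  rw [(hasDerivAt_tripleOverlapShape θ).deriv]
  have hsin : 0 < sin θ := sin_pos_of_pos_of_lt_pi (by linarith [hθ.1, pi_pos]) hθ.2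
  have hsin_shift : 0 < sin (θ - π / 6) :=
    sin_pos_of_pos_of_lt_pi (by linarith [hθ.1]) (by linarith [hθ.2, pi_pos])
  positivity

lemma tripleOverlapShape_pos {θ : ℝ} (hlo : π / 6 < θ) (hhi : θ ≤ π) :
    0 < tripleOverlapShape θ := by
  rw [← tripleOverlapShape_pi_div_six]
  exact strictMonoOn_tripleOverlapShape ⟨le_rfl, by linarith [pi_pos]⟩ ⟨hlo.le, hhi⟩ hlo

/-- The triple-overlap area
`A₃(θ) = R²[3(θ − π/6) + √3 cos²θ − 3 sin θ cos θ]` is strictly positive on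
`(π/6, arccos(1/√3))`, continuous at `θ = π/6`, and vanishes at `θ = π/6`. -/
theorem triple_overlap_area (R : ℝ) (hR : 0 < R)
    (A₃ : ℝ → ℝ)
    (hA₃ : ∀ θ, A₃ θ = R ^ 2 * (3 * (θ - π / 6) + Real.sqrt 3 * Real.cos θ ^ 2
      - 3 * Real.sin θ * Real.cos θ)) :
    (∀ θ ∈ Set.Ioo (π / 6) (Real.arccos (1 / Real.sqrt 3)), 0 < A₃ θ) ∧
    ContinuousAt A₃ (π / 6) ∧ A₃ (π / 6) = 0 := by
  have hA : A₃ = fun θ => R ^ 2 * tripleOverlapShape θ := funext hA₃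
  subst hA
  refine ⟨fun θ hθ => ?_, by fun_prop, by simp [tripleOverlapShape_pi_div_six]⟩
  have := tripleOverlapShape_pos hθ.1 (hθ.2.le.trans (arccos_le_pi _))
  positivity
end
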